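/- arXiv:2507.12654 — 2 statements merged into one kernel-verified Lean document; each statement's English description precedes it below -/
import Mathlib

section
/- Let 0 ≤ s < d and write ε = λ + 2. With T_n = n(n+1)/2 and s + kd ≥ T_d, the 2(k+d+1) inequalities defining the cycle 𝒞_{s,d,k} (namely 0 ≤ s+(i-1)d + (-2+ε)(s+id) + s+(i+1)d < 1 for 0 ≤ i ≤ k, 0 ≤ s+kd+(T_d-T_{d-j+1}) + (-2+ε)(s+kd+(T_d-T_{d-j})) + s+kd+(T_d-T_{d-j-1}) < 1 for 1 ≤ j ≤ d, and 0 ≤ s-(T_d-T_{d-j+1}) + (-2+ε)(s-(T_d-T_{d-j})) + s-(T_d-T_{d-j-1}) < 1 for 1 ≤ j ≤ d) all hold if and only if 1/(s+(k+1)d) ≤ ε < 1/(s+kd). -/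
/-- Triangular numbers extended to `ℤ`. -/
def T (n : ℤ) : ℤ := n * (n + 1) / 2

/-!
Each of the cycle's inequalities has the shape `0 ≤ a + (-2 + ε) b + c < 1`, i.e.
`0 ≤ Δ + ε b < 1` with `Δ = a - 2b + c` the second difference of the three entries.
Along the arithmetic progression `Δ = 0`; along the two triangular tails the identity
`T (n - 1) - 2 T n + T (n + 1) = 1` gives `Δ = -1` and `Δ = 1`. So the conditions read
`ε b ∈ [0, 1)`, `ε b ∈ [1, 2)` and `ε b ∈ [-1, 0)` for the middle entries `b`. Using
`T d ≤ s + k d`, the middle entries lie in `[0, s + k d]`, `[s + (k + 1) d, 2 (s + k d)]` and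
`[-(s + k d), -1]` respectively, and the extreme rows `i = k` and `j = 1` of the first two
families are exactly the bounds `ε (s + k d) < 1 ≤ ε (s + (k + 1) d)`.
-/

lemma two_mul_T (n : ℤ) : 2 * T n = n * (n + 1) :=
  Int.mul_ediv_cancel' (Int.even_mul_succ_self n).two_dvd

lemma T_nonneg (n : ℤ) : 0 ≤ T n := by
  have h := two_mul_T n
  rcases le_or_gt 0 n with hn | hn <;> nlinarith

lemma T_sub_T_sub_one (n : ℤ) : T n - T (n - 1) = n := by
  have h₁ := two_mul_T n
  have h₂ := two_mul_T (n - 1)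
  linarith

lemma T_sub_one_sub_two_mul_T_add_T_add_one (n : ℤ) :
    T (n - 1) - 2 * T n + T (n + 1) = 1 := by
  have h₁ := two_mul_T (n - 1)
  have h₂ := two_mul_T n
  have h₃ := two_mul_T (n + 1)
  linarith

lemma T_le_T {a b : ℤ} (ha : 0 ≤ a) (hab : a ≤ b) : T a ≤ T b := by
  have h₁ := two_mul_T a
  have h₂ := two_mul_T b
  nlinarith

lemma le_T_sub_T {d j : ℤ} (hj : 1 ≤ j) (hjd : j ≤ d) : d ≤ T d - T (d - j) := by
  have h₁ := T_le_T (by omega : 0 ≤ d - j) (by omega : d - j ≤ d - 1)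
  have h₂ := T_sub_T_sub_one d
  omega

lemma le_T_self {d : ℤ} (hd : 0 ≤ d) : d ≤ T d := by
  have h := two_mul_T d
  rcases hd.eq_or_lt with rfl | hd
  · exact T_nonneg 0
  · nlinarith

lemma cycle_row_iff {a b c Δ : ℝ} (h : a - 2 * b + c = Δ) (ε : ℝ) :
    (0 ≤ a + (-2 + ε) * b + c ∧ a + (-2 + ε) * b + c < 1) ↔ (-Δ ≤ ε * b ∧ ε * b < 1 - Δ) := by
  rw [show a + (-2 + ε) * b + c = Δ + ε * b by linear_combination h]
  constructor <;> rintro ⟨h₁, h₂⟩ <;> constructor <;> linarith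

section Rows

variable (s d k : ℤ) (ε : ℝ)

lemma progression_row_iff (i : ℤ) :
    (0 ≤ ((s + (i - 1) * d : ℤ) : ℝ) + (-2 + ε) * ((s + i * d : ℤ) : ℝ)
        + ((s + (i + 1) * d : ℤ) : ℝ) ∧
      ((s + (i - 1) * d : ℤ) : ℝ) + (-2 + ε) * ((s + i * d : ℤ) : ℝ)
        + ((s + (i + 1) * d : ℤ) : ℝ) < 1) ↔
    (0 ≤ ε * ((s + i * d : ℤ) : ℝ) ∧ ε * ((s + i * d : ℤ) : ℝ) < 1) := by
  rw [cycle_row_iff (Δ := 0) (by push_cast; ring)]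
  norm_num

lemma upper_tail_row_iff (j : ℤ) :
    (0 ≤ ((s + k * d + (T d - T (d - j + 1)) : ℤ) : ℝ)
        + (-2 + ε) * ((s + k * d + (T d - T (d - j)) : ℤ) : ℝ)
        + ((s + k * d + (T d - T (d - j - 1)) : ℤ) : ℝ) ∧
      ((s + k * d + (T d - T (d - j + 1)) : ℤ) : ℝ)
        + (-2 + ε) * ((s + k * d + (T d - T (d - j)) : ℤ) : ℝ)
        + ((s + k * d + (T d - T (d - j - 1)) : ℤ) : ℝ) < 1) ↔
    (1 ≤ ε * ((s + k * d + (T d - T (d - j)) : ℤ) : ℝ) ∧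
      ε * ((s + k * d + (T d - T (d - j)) : ℤ) : ℝ) < 2) := by
  have h : ((T (d - j - 1) - 2 * T (d - j) + T (d - j + 1) : ℤ) : ℝ) = 1 := by
    exact_mod_cast T_sub_one_sub_two_mul_T_add_T_add_one (d - j)
  rw [cycle_row_iff (Δ := -1) (by push_cast at h ⊢; linear_combination -h)]
  norm_num

lemma lower_tail_row_iff (j : ℤ) :
    (0 ≤ ((s - (T d - T (d - j + 1)) : ℤ) : ℝ)
        + (-2 + ε) * ((s - (T d - T (d - j)) : ℤ) : ℝ)
        + ((s - (T d - T (d - j - 1)) : ℤ) : ℝ) ∧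
      ((s - (T d - T (d - j + 1)) : ℤ) : ℝ)
        + (-2 + ε) * ((s - (T d - T (d - j)) : ℤ) : ℝ)
        + ((s - (T d - T (d - j - 1)) : ℤ) : ℝ) < 1) ↔
    (-1 ≤ ε * ((s - (T d - T (d - j)) : ℤ) : ℝ) ∧
      ε * ((s - (T d - T (d - j)) : ℤ) : ℝ) < 0) := by
  have h : ((T (d - j - 1) - 2 * T (d - j) + T (d - j + 1) : ℤ) : ℝ) = 1 := by
    exact_mod_cast T_sub_one_sub_two_mul_T_add_T_add_one (d - j)
  rw [cycle_row_iff (Δ := 1) (by push_cast at h ⊢; linear_combination h)]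
  norm_num

end Rows

section Bounds

variable {s d k : ℤ} {ε : ℝ}

lemma progression_rows (hs : 0 ≤ s) (hd : 0 ≤ d) (hε : 0 ≤ ε)
    (hP : ε * ((s + k * d : ℤ) : ℝ) < 1) (i : ℤ) (hi : 0 ≤ i) (hik : i ≤ k) :
    0 ≤ ε * ((s + i * d : ℤ) : ℝ) ∧ ε * ((s + i * d : ℤ) : ℝ) < 1 := by
  have h₀ : (0 : ℝ) ≤ ((s + i * d : ℤ) : ℝ) := by exact_mod_cast (by positivity : 0 ≤ s + i * d)
  have h₁ : ((s + i * d : ℤ) : ℝ) ≤ ((s + k * d : ℤ) : ℝ) := by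
    exact_mod_cast (by nlinarith : s + i * d ≤ s + k * d)
  exact ⟨mul_nonneg hε h₀, (mul_le_mul_of_nonneg_left h₁ hε).trans_lt hP⟩

lemma upper_tail_rows (hε : 0 ≤ ε) (hk : T d ≤ s + k * d)
    (hQ : 1 ≤ ε * ((s + (k + 1) * d : ℤ) : ℝ)) (hP : ε * ((s + k * d : ℤ) : ℝ) < 1)
    (j : ℤ) (hj : 1 ≤ j) (hjd : j ≤ d) :
    1 ≤ ε * ((s + k * d + (T d - T (d - j)) : ℤ) : ℝ) ∧
      ε * ((s + k * d + (T d - T (d - j)) : ℤ) : ℝ) < 2 := by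
  have h₀ : ((s + (k + 1) * d : ℤ) : ℝ) ≤ ((s + k * d + (T d - T (d - j)) : ℤ) : ℝ) := by
    exact_mod_cast (by linarith [le_T_sub_T hj hjd] : s + (k + 1) * d ≤ s + k * d + (T d - T (d - j)))
  have h₁ : ((s + k * d + (T d - T (d - j)) : ℤ) : ℝ) ≤ 2 * ((s + k * d : ℤ) : ℝ) := by
    exact_mod_cast (by linarith [T_nonneg (d - j)] : s + k * d + (T d - T (d - j)) ≤ 2 * (s + k * d))
  constructor
  · exact hQ.trans (mul_le_mul_of_nonneg_left h₀ hε)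
  · nlinarith [mul_le_mul_of_nonneg_left h₁ hε]

lemma lower_tail_rows (hs : 0 ≤ s) (hsd : s < d) (hk : T d ≤ s + k * d) (hε : 0 < ε)
    (hP : ε * ((s + k * d : ℤ) : ℝ) < 1) (j : ℤ) (hj : 1 ≤ j) (hjd : j ≤ d) :
    -1 ≤ ε * ((s - (T d - T (d - j)) : ℤ) : ℝ) ∧ ε * ((s - (T d - T (d - j)) : ℤ) : ℝ) < 0 := by
  have h₀ : -((s + k * d : ℤ) : ℝ) ≤ ((s - (T d - T (d - j)) : ℤ) : ℝ) := by
    exact_mod_cast (by linarith [T_nonneg (d - j)] : -(s + k * d) ≤ s - (T d - T (d - j)))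
  have h₁ : ((s - (T d - T (d - j)) : ℤ) : ℝ) < 0 := by
    exact_mod_cast (by linarith [le_T_sub_T hj hjd] : s - (T d - T (d - j)) < 0)
  constructor
  · nlinarith [mul_le_mul_of_nonneg_left h₀ hε.le]
  · exact mul_neg_of_pos_of_neg hε h₁

end Bounds

theorem stmt13 (s d k : ℤ) (hs : 0 ≤ s) (hsd : s < d) (hk : T d ≤ s + k * d)
    (ε : ℝ) :
    ((∀ i : ℤ, 0 ≤ i → i ≤ k →
        0 ≤ ((s + (i - 1) * d : ℤ) : ℝ) + (-2 + ε) * ((s + i * d : ℤ) : ℝ)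
            + ((s + (i + 1) * d : ℤ) : ℝ) ∧
        ((s + (i - 1) * d : ℤ) : ℝ) + (-2 + ε) * ((s + i * d : ℤ) : ℝ)
            + ((s + (i + 1) * d : ℤ) : ℝ) < 1) ∧
     (∀ j : ℤ, 1 ≤ j → j ≤ d →
        0 ≤ ((s + k * d + (T d - T (d - j + 1)) : ℤ) : ℝ)
            + (-2 + ε) * ((s + k * d + (T d - T (d - j)) : ℤ) : ℝ)
            + ((s + k * d + (T d - T (d - j - 1)) : ℤ) : ℝ) ∧
        ((s + k * d + (T d - T (d - j + 1)) : ℤ) : ℝ)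
            + (-2 + ε) * ((s + k * d + (T d - T (d - j)) : ℤ) : ℝ)
            + ((s + k * d + (T d - T (d - j - 1)) : ℤ) : ℝ) < 1) ∧
     (∀ j : ℤ, 1 ≤ j → j ≤ d →
        0 ≤ ((s - (T d - T (d - j + 1)) : ℤ) : ℝ)
            + (-2 + ε) * ((s - (T d - T (d - j)) : ℤ) : ℝ)
            + ((s - (T d - T (d - j - 1)) : ℤ) : ℝ) ∧
        ((s - (T d - T (d - j + 1)) : ℤ) : ℝ)
            + (-2 + ε) * ((s - (T d - T (d - j)) : ℤ) : ℝ)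
            + ((s - (T d - T (d - j - 1)) : ℤ) : ℝ) < 1)) ↔
    (1 / (((s + (k + 1) * d : ℤ) : ℝ)) ≤ ε ∧ ε < 1 / (((s + k * d : ℤ) : ℝ))) := by
  simp only [progression_row_iff, upper_tail_row_iff, lower_tail_row_iff]
  have hd : 1 ≤ d := by omega
  have hTd := le_T_self (by omega : 0 ≤ d)
  have hk₀ : 0 < k := pos_of_mul_pos_left (by omega : 0 < k * d) (by omega)
  have hP : (0 : ℝ) < ((s + k * d : ℤ) : ℝ) := by
    exact_mod_cast (by omega : 0 < s + k * d)
  have hQ : (0 : ℝ) < ((s + (k + 1) * d : ℤ) : ℝ) := by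
    exact_mod_cast (by linarith : 0 < s + (k + 1) * d)
  rw [div_le_iff₀ hQ, lt_div_iff₀ hP]
  constructor
  · rintro ⟨hprog, hupper, -⟩
    refine ⟨?_, (hprog k (by omega) le_rfl).2⟩
    have h := (hupper 1 le_rfl hd).1
    rwa [T_sub_T_sub_one, show s + k * d + d = s + (k + 1) * d by ring] at h
  · rintro ⟨hQ₁, hP₁⟩
    have hε : 0 < ε := pos_of_mul_pos_left (by linarith) hQ.le
    exact ⟨progression_rows hs (by omega) hε.le hP₁, upper_tail_rows hε.le hk hQ₁ hP₁,
      lower_tail_rows hs hsd hk hε hP₁⟩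
end

section
/- Let a₀, a₁ < 0 be integers, t = |a₀ - a₁|, m = max(a₀, a₁), and r = min{ℓ ≥ 0 : m + ℓt + T_ℓ ≥ 0} where T_ℓ = ℓ(ℓ+1)/2. Set s = m + rt + T_r and d = t + r. Then 0 ≤ s < d (assuming (a₀,a₁) is not of the form (m,m) with this construction yielding d > 0), and moreover r = ⌈(-1 - 2t + √((2t+1)² - 8m))/2⌉. -/
lemma T_eq_T_sub_one_add (n : ℤ) : T n = T (n - 1) + n := by
  have h := two_mul_T n
  have h' := two_mul_T (n - 1)
  linarith

lemma sq_two_mul_add_eq (m t l : ℤ) :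
    (2 * (l + t) + 1) ^ 2 = (2 * t + 1) ^ 2 - 8 * m + 8 * (m + l * t + T l) := by
  linear_combination (-4 : ℤ) * two_mul_T l

lemma ceil_neg_one_add_sqrt_div_two {k D : ℤ} (hk : 0 < k)
    (hlo : (2 * k - 1) ^ 2 < D) (hhi : D ≤ (2 * k + 1) ^ 2) :
    ⌈(-1 + √(D : ℝ)) / 2⌉ = k := by
  have hk' : (1 : ℝ) ≤ k := by exact_mod_cast hk
  have hlo' : 2 * (k : ℝ) - 1 < √(D : ℝ) :=
    (Real.lt_sqrt (by linarith)).2 (by exact_mod_cast hlo)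
  have hhi' : √(D : ℝ) ≤ 2 * k + 1 :=
    Real.sqrt_le_iff.2 ⟨by linarith, by exact_mod_cast hhi⟩
  rw [Int.ceil_eq_iff]
  constructor <;> linarith

section LeastNonneg

variable {m t r : ℤ} (hm : m < 0) (hr : IsLeast {l : ℤ | 0 ≤ l ∧ 0 ≤ m + l * t + T l} r)
include hm hr

lemma one_le_of_isLeast : 1 ≤ r := by
  obtain ⟨⟨hr0, hfr⟩, -⟩ := hr
  rcases hr0.eq_or_lt with rfl | hpos
  · simp [T] at hfr
    omega
  · omega

lemma lt_zero_of_isLeast_sub_one : m + (r - 1) * t + T (r - 1) < 0 := by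
  by_contra! h
  have := hr.2 ⟨by linarith [one_le_of_isLeast hm hr], h⟩
  omega

end LeastNonneg

theorem stmt16_general (a0 a1 : ℤ) (h0 : a0 < 0) (h1 : a1 < 0)
    (t m : ℤ) (hm : m = max a0 a1)
    (r : ℤ) (hr : IsLeast {l : ℤ | 0 ≤ l ∧ 0 ≤ m + l * t + T l} r)
    (s d : ℤ) (hsdef : s = m + r * t + T r) (hddef : d = t + r) :
    (0 ≤ s ∧ s < d) ∧
    r = ⌈((-1 - 2 * (t : ℝ) + Real.sqrt ((2 * (t : ℝ) + 1) ^ 2 - 8 * (m : ℝ))) / 2)⌉ := by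
  have hm0 : m < 0 := hm ▸ max_lt h0 h1
  have hprev := lt_zero_of_isLeast_sub_one hm0 hr
  have hs : 0 ≤ s := hsdef ▸ hr.1.2
  have hgap : s = m + (r - 1) * t + T (r - 1) + d := by
    rw [hsdef, hddef, T_eq_T_sub_one_add r]; ring
  refine ⟨⟨hs, by omega⟩, ?_⟩
  have hlo := sq_two_mul_add_eq m t (r - 1)
  have hhi := sq_two_mul_add_eq m t r
  have hceil := ceil_neg_one_add_sqrt_div_two (k := r + t) (D := (2 * t + 1) ^ 2 - 8 * m)
    (by omega) (by linarith) (by linarith)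
  push_cast at hceil
  rw [show (-1 - 2 * (t : ℝ) + √((2 * t + 1) ^ 2 - 8 * m)) / 2
      = (-1 + √((2 * t + 1) ^ 2 - 8 * m)) / 2 - t by ring, Int.ceil_sub_intCast, hceil]
  ring

theorem stmt16 (a0 a1 : ℤ) (h0 : a0 < 0) (h1 : a1 < 0)
    (t m : ℤ) (ht : t = |a0 - a1|) (hm : m = max a0 a1)
    (r : ℤ) (hr : IsLeast {l : ℤ | 0 ≤ l ∧ 0 ≤ m + l * t + T l} r)
    (s d : ℤ) (hsdef : s = m + r * t + T r) (hddef : d = t + r) :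
    (0 ≤ s ∧ s < d) ∧
    r = ⌈((-1 - 2 * (t : ℝ) + Real.sqrt ((2 * (t : ℝ) + 1) ^ 2 - 8 * (m : ℝ))) / 2)⌉ :=
  stmt16_general a0 a1 h0 h1 t m hm r hr s d hsdef hddef
end
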